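/- Let {S(t)}_{t≥0} be a twin semigroup on a norming dual pair (Y,Y⋄) with constants M ≥ 1, ω ∈ ℝ and Laplace transform S̄(λ) for λ > ω. If y, z ∈ Y satisfy y = S̄(λ)(λ·y − z) for some λ > ω (i.e. y ∈ D(C) and z ∈ Cy), then limsup_{h↓0} (1/h)‖S(h)y − y‖ ≤ M‖z‖; in particular this limsup is finite. -/

import Mathlib

/-! Pairing with `yd`, the identity `y = S̄(λ)(λy − z)` and the semigroup law give
`⟨yd, S(t)y⟩ = e^{λt} ∫_t^∞ e^{−λu} ⟨yd, S(u)(λy − z)⟩ du`. This is absolutely continuous in `t`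
with a.e. derivative `λ⟨yd, S(t)y⟩ − ⟨yd, S(t)(λy − z)⟩ = ⟨yd, S(t)z⟩`, hence
`⟨yd, S(h)y − y⟩ = ∫_0^h ⟨yd, S(s)z⟩ ds`, which is at most `h M e^{|ω|h} ‖z‖ ‖yd‖`.
As `Yd` norms `Y`, `‖S(h)y − y‖ ≤ h M e^{|ω|h} ‖z‖`, and the bound divided by `h` tends to `M‖z‖`.
-/

open MeasureTheory Filter Topology

/-- A norming dual pair of real Banach spaces: a bounded bilinear pairing such that
each space norms the other. -/
structure NormingDualPair (Y Yd : Type*) [NormedAddCommGroup Y] [NormedSpace ℝ Y]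
    [CompleteSpace Y] [NormedAddCommGroup Yd] [NormedSpace ℝ Yd] [CompleteSpace Yd] where
  pair : Yd →ₗ[ℝ] Y →ₗ[ℝ] ℝ
  M : ℝ
  one_le_M : 1 ≤ M
  pair_bound : ∀ (yd : Yd) (y : Y), |pair yd y| ≤ M * ‖yd‖ * ‖y‖
  norm_eq : ∀ y : Y, ‖y‖ = sSup {r : ℝ | ∃ yd : Yd, ‖yd‖ ≤ 1 ∧ r = |pair yd y|}
  norm_eq' : ∀ yd : Yd, ‖yd‖ = sSup {r : ℝ | ∃ y : Y, ‖y‖ ≤ 1 ∧ r = |pair yd y|}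

/-- A twin semigroup on a norming dual pair `(Y, Yd)`: a semigroup of twin operators,
exponentially bounded, with weakly measurable orbits, whose Laplace transform (for
`λ > omega`) is again a twin operator. -/
structure TwinSemigroup (Y Yd : Type*) [NormedAddCommGroup Y] [NormedSpace ℝ Y]
    [CompleteSpace Y] [NormedAddCommGroup Yd] [NormedSpace ℝ Yd] [CompleteSpace Yd]
    (P : NormingDualPair Y Yd) where
  /-- the action of `S(t)` on `Y` -/
  S : ℝ → Y →ₗ[ℝ] Y
  /-- the action of `S(t)` on `Yd` -/
  Sd : ℝ → Yd →ₗ[ℝ] Yd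
  compat : ∀ t : ℝ, 0 ≤ t → ∀ (yd : Yd) (y : Y), P.pair (Sd t yd) y = P.pair yd (S t y)
  S_zero : S 0 = LinearMap.id
  S_add : ∀ t s : ℝ, 0 ≤ t → 0 ≤ s → ∀ y : Y, S (t + s) y = S t (S s y)
  M : ℝ
  omega : ℝ
  one_le_M : 1 ≤ M
  bound : ∀ t : ℝ, 0 ≤ t → ∀ (yd : Yd) (y : Y),
    |P.pair yd (S t y)| ≤ M * Real.exp (omega * t) * ‖y‖ * ‖yd‖
  meas : ∀ (yd : Yd) (y : Y), Measurable fun t : ℝ => P.pair yd (S t y)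
  /-- the action of the Laplace transform `S̄(λ)` on `Y` -/
  lap : ℝ → Y →ₗ[ℝ] Y
  /-- the action of the Laplace transform `S̄(λ)` on `Yd` -/
  lapd : ℝ → Yd →ₗ[ℝ] Yd
  lap_compat : ∀ l : ℝ, omega < l → ∀ (yd : Yd) (y : Y),
    P.pair (lapd l yd) y = P.pair yd (lap l y)
  lap_eq : ∀ l : ℝ, omega < l → ∀ (yd : Yd) (y : Y),
    P.pair yd (lap l y) = ∫ t in Set.Ioi (0:ℝ), Real.exp (-l * t) * P.pair yd (S t y)

open Set Real Interval

theorem exp_mul_integral_Ioi_sub_exp_mul_integral_Ioi {ψ : ℝ → ℝ} {a b : ℝ} (l : ℝ)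
    (hψ : IntegrableOn ψ (Ioi a)) (hab : a ≤ b) :
    exp (l * b) * (∫ u in Ioi b, ψ u) - exp (l * a) * ∫ u in Ioi a, ψ u
      = ∫ s in a..b, (l * (exp (l * s) * ∫ u in Ioi s, ψ u) - exp (l * s) * ψ s) := by
  set C := ∫ u in Ioi a, ψ u
  have tail_eq : ∀ s, a ≤ s → ∫ u in Ioi s, ψ u = C - ∫ u in a..s, ψ u := fun s hs =>
    (intervalIntegral.integral_Ioi_sub_Ioi hψ hs ▸ (sub_sub_cancel C _)).symm
  have hψab : IntervalIntegrable ψ volume a b :=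
    (intervalIntegrable_iff_integrableOn_Ioc_of_le hab).2 (hψ.mono_set Ioc_subset_Ioi_self)
  set G : ℝ → ℝ := fun s => exp (l * s) * (C - ∫ u in a..s, ψ u)
  have hexp_ac : AbsolutelyContinuousOnInterval (fun s => exp (l * s)) a b :=
    (contDiff_exp.comp (contDiff_const.mul contDiff_id)).contDiffOn.absolutelyContinuousOnInterval
  have hG : AbsolutelyContinuousOnInterval G a b :=
    hexp_ac.mul (contDiff_const.contDiffOn.absolutelyContinuousOnInterval.sub
        (hψab.absolutelyContinuousOnInterval_intervalIntegral left_mem_uIcc))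
  have deriv_G : ∀ᵐ s, s ∈ Ι a b →
      deriv G s = l * (exp (l * s) * ∫ u in Ioi s, ψ u) - exp (l * s) * ψ s := by
    filter_upwards [hψab.ae_hasDerivAt_integral] with s hs hsab
    have hs' : s ∈ uIcc a b := uIoc_subset_uIcc hsab
    have hexp : HasDerivAt (fun s => exp (l * s)) (exp (l * s) * l) s := by
      simpa using ((hasDerivAt_id s).const_mul l).exp
    have hGs : HasDerivAt G (exp (l * s) * l * (C - ∫ u in a..s, ψ u) + exp (l * s) * -ψ s) s :=
      hexp.mul ((hs hs' a left_mem_uIcc).const_sub C)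
    rw [hGs.deriv, tail_eq s (uIoc_of_le hab ▸ hsab).1.le]
    ring
  rw [← intervalIntegral.integral_congr_ae deriv_G, hG.integral_deriv_eq_sub]
  simp only [G, C, tail_eq b hab, intervalIntegral.integral_same, sub_zero]

theorem NormingDualPair.norm_le_of_forall_abs_pair_le {Y Yd : Type*} [NormedAddCommGroup Y]
    [NormedSpace ℝ Y] [CompleteSpace Y] [NormedAddCommGroup Yd] [NormedSpace ℝ Yd]
    [CompleteSpace Yd] (P : NormingDualPair Y Yd) {y : Y} {C : ℝ} (hC : 0 ≤ C)
    (h : ∀ yd : Yd, ‖yd‖ ≤ 1 → |P.pair yd y| ≤ C) : ‖y‖ ≤ C := by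
  rw [P.norm_eq y]
  exact Real.sSup_le (by rintro r ⟨yd, hyd, rfl⟩; exact h yd hyd) hC

namespace TwinSemigroup

variable {Y Yd : Type*} [NormedAddCommGroup Y] [NormedSpace ℝ Y] [CompleteSpace Y]
  [NormedAddCommGroup Yd] [NormedSpace ℝ Yd] [CompleteSpace Yd]
  {P : NormingDualPair Y Yd} (T : TwinSemigroup Y Yd P)

theorem abs_pair_S_le_of_le {t h : ℝ} (ht : 0 ≤ t) (hth : t ≤ h) (yd : Yd) (y : Y) :
    |P.pair yd (T.S t y)| ≤ T.M * exp (|T.omega| * h) * ‖y‖ * ‖yd‖ := by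
  have hexp : T.omega * t ≤ |T.omega| * h :=
    mul_le_mul (le_abs_self _) hth ht (abs_nonneg _)
  have hM : 0 ≤ T.M := zero_le_one.trans T.one_le_M
  refine (T.bound t ht yd y).trans ?_
  gcongr

theorem integrableOn_exp_mul_pair_S {l : ℝ} (hl : T.omega < l) (yd : Yd) (w : Y) :
    IntegrableOn (fun u => exp (-l * u) * P.pair yd (T.S u w)) (Ioi 0) := by
  refine Integrable.mono' ((exp_neg_integrableOn_Ioi 0 (sub_pos.2 hl)).const_mul
    (T.M * ‖w‖ * ‖yd‖)) ((by fun_prop : Measurable fun u => exp (-l * u)).mul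
      (T.meas yd w)).aestronglyMeasurable ?_
  rw [ae_restrict_iff' measurableSet_Ioi]
  filter_upwards with u hu
  rw [norm_mul, norm_of_nonneg (exp_pos _).le, Real.norm_eq_abs]
  calc exp (-l * u) * |P.pair yd (T.S u w)|
      ≤ exp (-l * u) * (T.M * exp (T.omega * u) * ‖w‖ * ‖yd‖) :=
        mul_le_mul_of_nonneg_left (T.bound u (le_of_lt hu) yd w) (exp_pos _).le
    _ = T.M * ‖w‖ * ‖yd‖ * exp (-(l - T.omega) * u) := by
        rw [show -(l - T.omega) * u = -l * u + T.omega * u by ring, exp_add]; ring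

theorem pair_S_lap {l t : ℝ} (hl : T.omega < l) (ht : 0 ≤ t) (yd : Yd) (w : Y) :
    P.pair yd (T.S t (T.lap l w))
      = exp (l * t) * ∫ u in Ioi t, exp (-l * u) * P.pair yd (T.S u w) := by
  rw [← T.compat t ht, T.lap_eq l hl, ← integral_const_mul]
  have hshift := (measurePreserving_add_right volume t).setIntegral_preimage_emb
    (measurableEmbedding_addRight t) (fun u => exp (l * t) * (exp (-l * u) * P.pair yd (T.S u w)))
    (Ioi t)
  rw [preimage_add_const_Ioi, sub_self] at hshift
  rw [← hshift]
  refine setIntegral_congr_fun measurableSet_Ioi fun s hs => ?_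
  rw [T.compat t ht, add_comm s t, T.S_add t s ht (le_of_lt hs), ← mul_assoc, ← exp_add]
  ring_nf

theorem pair_S_sub_eq_integral {l h : ℝ} (hl : T.omega < l) {y z : Y}
    (hy : y = T.lap l (l • y - z)) (hh : 0 ≤ h) (yd : Yd) :
    P.pair yd (T.S h y - y) = ∫ s in 0..h, P.pair yd (T.S s z) := by
  generalize hw : l • y - z = w at hy
  have orbit_eq : ∀ t, 0 ≤ t →
      P.pair yd (T.S t y) = exp (l * t) * ∫ u in Ioi t, exp (-l * u) * P.pair yd (T.S u w) :=
    fun t ht => hy ▸ T.pair_S_lap hl ht yd w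
  have hint := exp_mul_integral_Ioi_sub_exp_mul_integral_Ioi l
    (T.integrableOn_exp_mul_pair_S hl yd w) hh
  rw [← orbit_eq h hh, ← orbit_eq 0 le_rfl, T.S_zero, LinearMap.id_apply] at hint
  rw [map_sub, hint]
  refine intervalIntegral.integral_congr fun s hs => ?_
  have hs0 : 0 ≤ s := (uIcc_of_le hh ▸ hs).1
  rw [← orbit_eq s hs0, ← mul_assoc, ← exp_add, neg_mul, add_neg_cancel, exp_zero, one_mul,
    ← hw, map_sub, map_sub, map_smul, map_smul, smul_eq_mul, sub_sub_cancel]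

theorem norm_S_sub_le {l h : ℝ} (hl : T.omega < l) {y z : Y}
    (hy : y = T.lap l (l • y - z)) (hh : 0 ≤ h) :
    ‖T.S h y - y‖ ≤ h * (T.M * exp (|T.omega| * h) * ‖z‖) := by
  have hM : 0 ≤ T.M := zero_le_one.trans T.one_le_M
  refine P.norm_le_of_forall_abs_pair_le (y := T.S h y - y) (by positivity) fun yd hyd => ?_
  have integrand_le : ∀ s ∈ Ι 0 h, ‖P.pair yd (T.S s z)‖ ≤ T.M * exp (|T.omega| * h) * ‖z‖ := by
    intro s hs
    rw [uIoc_of_le hh] at hs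
    calc ‖P.pair yd (T.S s z)‖ ≤ T.M * exp (|T.omega| * h) * ‖z‖ * ‖yd‖ :=
          T.abs_pair_S_le_of_le hs.1.le hs.2 yd z
      _ ≤ T.M * exp (|T.omega| * h) * ‖z‖ := mul_le_of_le_one_right (by positivity) hyd
  calc |P.pair yd (T.S h y - y)| = ‖∫ s in 0..h, P.pair yd (T.S s z)‖ := by
        rw [T.pair_S_sub_eq_integral hl hy hh, Real.norm_eq_abs]
    _ ≤ T.M * exp (|T.omega| * h) * ‖z‖ * |h - 0| :=
        intervalIntegral.norm_integral_le_of_norm_le_const integrand_le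
    _ = h * (T.M * exp (|T.omega| * h) * ‖z‖) := by rw [sub_zero, abs_of_nonneg hh, mul_comm]

end TwinSemigroup

/-- Lemma 3.3 of Diekmann–Verduyn Lunel: if `y ∈ D(C)` and `z ∈ Cy` (i.e.
`y = S̄(λ)(λy − z)` for some `λ > ω`) then
`limsup_{h↓0} (1/h)‖S(h)y − y‖ ≤ M‖z‖`; in particular this limsup is finite. -/
theorem twin_limsup_difference_quotient
    {Y Yd : Type*} [NormedAddCommGroup Y] [NormedSpace ℝ Y] [CompleteSpace Y]
    [NormedAddCommGroup Yd] [NormedSpace ℝ Yd] [CompleteSpace Yd]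
    (P : NormingDualPair Y Yd) (T : TwinSemigroup Y Yd P) (y z : Y)
    (hy : ∃ l : ℝ, T.omega < l ∧ y = T.lap l (l • y - z)) :
    Filter.limsup (fun h : ℝ => (((1 / h) * ‖T.S h y - y‖ : ℝ) : EReal)) (𝓝[>] (0:ℝ))
      ≤ ((T.M * ‖z‖ : ℝ) : EReal) := by
  obtain ⟨l, hl, hy⟩ := hy
  set bound : ℝ → ℝ := fun h => T.M * exp (|T.omega| * h) * ‖z‖
  have quotient_le : ∀ᶠ h in 𝓝[>] (0:ℝ),
      (((1 / h) * ‖T.S h y - y‖ : ℝ) : EReal) ≤ (bound h : EReal) := by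
    filter_upwards [self_mem_nhdsWithin] with h hh
    rw [EReal.coe_le_coe_iff, one_div, inv_mul_le_iff₀ hh]
    exact T.norm_S_sub_le hl hy hh.le
  have bound_tendsto : Tendsto (fun h => (bound h : EReal)) (𝓝[>] (0:ℝ)) (𝓝 (T.M * ‖z‖ : ℝ)) :=
    ((continuous_coe_real_ereal.comp (by fun_prop : Continuous bound)).tendsto' 0 _
      (by simp [bound])).mono_left nhdsWithin_le_nhds
  exact (limsup_le_limsup quotient_le).trans_eq bound_tendsto.limsup_eq
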